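/- arXiv:1103.0709 — 5 statements merged into one kernel-verified Lean document; each statement's English description precedes it below -/
import Mathlib

section
/- The polynomial identity (2 + X + X^3)(2 + X) = (1 + X)(4 + X^2 + X^3) holds in ℤ[X], and each of the four factors 2 + X + X^3, 2 + X, 1 + X, 4 + X^2 + X^3 is irreducible in the monoid of polynomials with nonnegative integer coefficients. -/
open Polynomial

def NNcoeff (P : Polynomial ℤ) : Prop := ∀ n, 0 ≤ P.coeff n

def IrredNN (P : Polynomial ℤ) : Prop :=
  NNcoeff P ∧ P ≠ 1 ∧
    ∀ S T : Polynomial ℤ, NNcoeff S → NNcoeff T → P = S * T → S = 1 ∨ T = 1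

/-! Over ℤ the leading coefficients of a factorization of a monic polynomial are both `1` or both
`-1`; nonnegativity of the coefficients rules out `-1`, so both factors of a monic polynomial
in `N₁` are monic, and the question becomes one about degrees and finitely many coefficients. -/

variable {P S T : Polynomial ℤ}

theorem monic_and_monic_of_eq_mul (hP : P.Monic) (hS : NNcoeff S) (h : P = S * T) :
    S.Monic ∧ T.Monic := by
  have hlc : S.leadingCoeff * T.leadingCoeff = 1 := by
    rw [← leadingCoeff_mul, ← h, hP.leadingCoeff]
  rcases Int.mul_eq_one_iff_eq_one_or_neg_one.mp hlc with ⟨hS1, hT1⟩ | ⟨hS1, -⟩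
  · exact ⟨hS1, hT1⟩
  · have := hS S.natDegree
    rw [← coeff_natDegree] at hS1
    omega

theorem irredNN_of_monic (hP : P.Monic) (hNN : NNcoeff P) (hdeg : P.natDegree ≠ 0)
    (h : ∀ S T, NNcoeff S → NNcoeff T → S.Monic → T.Monic → P = S * T →
      S.natDegree ≠ 0 → T.natDegree ≠ 0 → False) :
    IrredNN P := by
  refine ⟨hNN, fun h1 => hdeg (by rw [h1, natDegree_one]), fun S T hS hT hST => ?_⟩
  obtain ⟨hSm, hTm⟩ := monic_and_monic_of_eq_mul hP hS hST
  by_contra! hne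
  exact h S T hS hT hSm hTm hST (mt hSm.natDegree_eq_zero.mp hne.1)
    (mt hTm.natDegree_eq_zero.mp hne.2)

theorem irredNN_of_monic_of_natDegree_eq_one (hP : P.Monic) (hNN : NNcoeff P)
    (hdeg : P.natDegree = 1) : IrredNN P := by
  refine irredNN_of_monic hP hNN (by omega) fun S T _ _ hSm hTm hST hS0 hT0 => ?_
  have := natDegree_mul hSm.ne_zero hTm.ne_zero
  rw [← hST] at this
  omega

theorem coeff_mul_of_natDegree_eq_one_of_natDegree_eq_two (hS : S.Monic) (hT : T.Monic)
    (hS1 : S.natDegree = 1) (hT2 : T.natDegree = 2) :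
    (S * T).coeff 0 = S.coeff 0 * T.coeff 0 ∧
    (S * T).coeff 1 = S.coeff 0 * T.coeff 1 + T.coeff 0 ∧
    (S * T).coeff 2 = S.coeff 0 + T.coeff 1 := by
  have hs1 : S.coeff 1 = 1 := hS1 ▸ hS.coeff_natDegree
  have hs2 : S.coeff 2 = 0 := coeff_eq_zero_of_natDegree_lt (by omega)
  have ht2 : T.coeff 2 = 1 := hT2 ▸ hT.coeff_natDegree
  simp only [coeff_mul, Finset.Nat.sum_antidiagonal_eq_sum_range_succ_mk, Finset.sum_range_succ,
    Finset.sum_range_zero, hs1, hs2, ht2]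
  refine ⟨by ring, by ring, by ring⟩

/-- A monic cubic in `N₁` is irreducible unless it is `(X + a) * (X ^ 2 + d * X + c)` with
`a, c, d ≥ 0`. -/
theorem irredNN_of_monic_of_natDegree_eq_three (hP : P.Monic) (hNN : NNcoeff P)
    (hdeg : P.natDegree = 3)
    (h : ∀ a c d : ℤ, 0 ≤ a → 0 ≤ c → 0 ≤ d →
      P.coeff 0 = a * c → P.coeff 1 = a * d + c → P.coeff 2 = a + d → False) :
    IrredNN P := by
  refine irredNN_of_monic hP hNN (by omega) fun S T hS hT hSm hTm hST hS0 hT0 => ?_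
  have hsum := natDegree_mul hSm.ne_zero hTm.ne_zero
  rw [← hST, hdeg] at hsum
  rcases (by omega : S.natDegree = 1 ∨ T.natDegree = 1) with hS1 | hT1
  · obtain ⟨e0, e1, e2⟩ :=
      coeff_mul_of_natDegree_eq_one_of_natDegree_eq_two hSm hTm hS1 (by omega)
    rw [← hST] at e0 e1 e2
    exact h _ _ _ (hS 0) (hT 0) (hT 1) e0 e1 e2
  · obtain ⟨e0, e1, e2⟩ :=
      coeff_mul_of_natDegree_eq_one_of_natDegree_eq_two hTm hSm hT1 (by omega)
    rw [mul_comm, ← hST] at e0 e1 e2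
    exact h _ _ _ (hT 0) (hS 0) (hS 1) e0 e1 e2

theorem stmt3 :
    (2 + X + X ^ 3) * (2 + X) = (1 + X) * (4 + X ^ 2 + X ^ 3 : Polynomial ℤ) ∧
    IrredNN (2 + X + X ^ 3) ∧ IrredNN (2 + X) ∧
    IrredNN (1 + X) ∧ IrredNN (4 + X ^ 2 + X ^ 3) := by
  refine ⟨by ring, ?_, ?_, ?_, ?_⟩
  · refine irredNN_of_monic_of_natDegree_eq_three (by monicity!)
      (fun n => by rcases n with _ | _ | _ | _ | n <;> simp [coeff_X]) (by compute_degree!) ?_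
    intro a c d _ _ _ e0 e1 e2
    simp [coeff_X] at e0 e1 e2
    have ha : a = 0 := by omega
    simp [ha] at e0
  · exact irredNN_of_monic_of_natDegree_eq_one (by monicity!)
      (fun n => by rcases n with _ | _ | n <;> simp [coeff_X]) (by compute_degree!)
  · exact irredNN_of_monic_of_natDegree_eq_one (by monicity!)
      (fun n => by rcases n with _ | _ | n <;> simp [coeff_X, coeff_one]) (by compute_degree!)
  · refine irredNN_of_monic_of_natDegree_eq_three (by monicity!)
      (fun n => by rcases n with _ | _ | _ | _ | n <;> simp) (by compute_degree!) ?_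
    intro a c d _ _ _ e0 e1 e2
    simp at e0 e1 e2
    have hc : c = 0 := by nlinarith
    simp [hc] at e0
end

section
/- Let P ∈ ℤ[X] have nonnegative coefficients, nonzero constant term, and exactly 4 monomial terms counted with multiplicity (i.e., P(1) = 4). Then P has unique factorization in the monoid N₁ of polynomials with nonnegative integer coefficients: any two factorizations of P into irreducibles of N₁ agree up to reordering of the factors. -/
open Polynomial

lemma nn_eval_zero {R : Polynomial ℤ} (h : ∀ n, 0 ≤ R.coeff n) (h0 : R.eval 1 = 0) : R = 0 := by
  rw [Polynomial.eval_eq_sum_range] at h0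
  simp only [one_pow, mul_one] at h0
  have hz := (Finset.sum_eq_zero_iff_of_nonneg (fun i _ => h i)).mp h0
  ext n
  by_cases hn : n ≤ R.natDegree
  · simpa using hz n (Finset.mem_range.mpr (Nat.lt_succ_of_le hn))
  · simp [Polynomial.coeff_eq_zero_of_natDegree_lt (Nat.lt_of_not_le hn)]

lemma coeff_le_eval_one {Q : Polynomial ℤ} (hQ : ∀ n, 0 ≤ Q.coeff n) (n : ℕ) :
    Q.coeff n ≤ Q.eval 1 := by
  rw [Polynomial.eval_eq_sum_range]
  simp only [one_pow, mul_one]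
  by_cases hn : n ≤ Q.natDegree
  · exact Finset.single_le_sum (fun i _ => hQ i) (Finset.mem_range.mpr (Nat.lt_succ_of_le hn))
  · rw [Polynomial.coeff_eq_zero_of_natDegree_lt (Nat.lt_of_not_le hn)]
    exact Finset.sum_nonneg (fun i _ => hQ i)

lemma two_le_eval {Q : Polynomial ℤ} (hQ : ∀ n, 0 ≤ Q.coeff n) (h1 : Q ≠ 1)
    (h0 : Q.coeff 0 ≠ 0) : 2 ≤ Q.eval 1 := by
  have hc0 : 1 ≤ Q.coeff 0 := lt_of_le_of_ne (hQ 0) (Ne.symm h0)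
  have hle : Q.coeff 0 ≤ Q.eval 1 := coeff_le_eval_one hQ 0
  by_contra hlt
  have he1 : Q.eval 1 = 1 := by omega
  have : Q - 1 = 0 := by
    apply nn_eval_zero
    · intro n
      rcases n with _ | n
      · simp; omega
      · simpa [Polynomial.coeff_one] using hQ (n + 1)
    · simp [he1]
  exact h1 (sub_eq_zero.mp this)

lemma class2 {Q : Polynomial ℤ} (hQ : ∀ n, 0 ≤ Q.coeff n) (h0 : Q.coeff 0 ≠ 0)
    (h1 : Q.eval 1 = 2) : Q = 2 ∨ ∃ a, 1 ≤ a ∧ Q = 1 + X ^ a := by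
  have hc0 : 1 ≤ Q.coeff 0 := lt_of_le_of_ne (hQ 0) (Ne.symm h0)
  have hle : Q.coeff 0 ≤ 2 := h1 ▸ coeff_le_eval_one hQ 0
  rcases (by omega : Q.coeff 0 = 2 ∨ Q.coeff 0 = 1) with h2 | hone
  · left
    have : Q - 2 = 0 := by
      apply nn_eval_zero
      · intro n
        rcases n with _ | n
        · simp [h2]
        · simpa using hQ (n + 1)
      · simp [h1]
    exact sub_eq_zero.mp this
  · right
    have hQ0 : Q ≠ 0 := fun h => h0 (by simp [h])
    have hlead : 1 ≤ Q.coeff Q.natDegree := by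
      have hne := Polynomial.leadingCoeff_ne_zero.mpr hQ0
      rw [Polynomial.leadingCoeff] at hne
      have h' := hQ Q.natDegree
      omega
    set a := Q.natDegree with ha
    have ha1 : 1 ≤ a := by
      by_contra h
      have : a = 0 := by omega
      have := Polynomial.eq_C_of_natDegree_eq_zero this
      rw [this] at h1 hone
      simp at h1 hone
      omega
    refine ⟨a, ha1, ?_⟩
    have : Q - (1 + X ^ a) = 0 := by
      apply nn_eval_zero
      · intro n
        simp only [Polynomial.coeff_sub, Polynomial.coeff_add, Polynomial.coeff_one,
          Polynomial.coeff_X_pow]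
        by_cases hn0 : n = 0
        · subst hn0; simp [Nat.ne_of_lt' ha1]; omega
        · by_cases hna : n = a
          · subst hna; simp [hn0]; omega
          · simp [hn0, hna]; exact hQ n
      · simp [h1]
    exact sub_eq_zero.mp this

lemma keylem {a b c d : ℕ} (ha : 1 ≤ a) (hab : a ≤ b) (hc : 1 ≤ c) (hcd : c ≤ d)
    (h : ((1 : Polynomial ℤ) + X ^ a) * (1 + X ^ b) = (1 + X ^ c) * (1 + X ^ d)) :
    a = c ∧ b = d := by
  have h' : (1 : Polynomial ℤ) + X ^ a + X ^ b + X ^ (a + b)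
      = 1 + X ^ c + X ^ d + X ^ (c + d) := by
    rw [show (1 : Polynomial ℤ) + X ^ a + X ^ b + X ^ (a + b)
        = (1 + X ^ a) * (1 + X ^ b) by ring, h]; ring
  have H : ∀ k : ℕ,
      ((if k = 0 then (1 : ℤ) else 0) + (if k = a then 1 else 0) +
        (if k = b then 1 else 0) + (if k = a + b then 1 else 0)) =
      ((if k = 0 then 1 else 0) + (if k = c then 1 else 0) +
        (if k = d then 1 else 0) + (if k = c + d then 1 else 0)) := by
    intro k
    have := congrArg (fun p => Polynomial.coeff p k) h'
    simpa [Polynomial.coeff_one, Polynomial.coeff_X_pow, eq_comm] using this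
  have F1 : a = c ∨ a = d ∨ a = c + d := by
    have := H a; split_ifs at this <;> omega
  have F2 : a + b = c ∨ a + b = d ∨ a + b = c + d := by
    have := H (a + b); split_ifs at this <;> omega
  have F3 : c + d = a ∨ c + d = b ∨ c + d = a + b := by
    have := H (c + d); split_ifs at this <;> omega
  omega

lemma keylem' {a b c d : ℕ} (ha : 1 ≤ a) (hb : 1 ≤ b) (hc : 1 ≤ c) (hd : 1 ≤ d)
    (h : ((1 : Polynomial ℤ) + X ^ a) * (1 + X ^ b) = (1 + X ^ c) * (1 + X ^ d)) :
    (a = c ∧ b = d) ∨ (a = d ∧ b = c) := by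
  rcases le_total a b with hab | hba <;> rcases le_total c d with hcd | hdc
  · exact Or.inl (keylem ha hab hc hcd h)
  · have := keylem ha hab hd hdc (by linear_combination h)
    exact Or.inr ⟨this.1, this.2⟩
  · have := keylem hb hba hc hcd (by linear_combination h)
    exact Or.inr ⟨this.2, this.1⟩
  · have := keylem hb hba hd hdc (by linear_combination h)
    exact Or.inl ⟨this.2, this.1⟩

lemma pairs {A B C D : Polynomial ℤ}
    (hA : A = 2 ∨ ∃ a, 1 ≤ a ∧ A = 1 + X ^ a)
    (hB : B = 2 ∨ ∃ a, 1 ≤ a ∧ B = 1 + X ^ a)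
    (hC : C = 2 ∨ ∃ a, 1 ≤ a ∧ C = 1 + X ^ a)
    (hD : D = 2 ∨ ∃ a, 1 ≤ a ∧ D = 1 + X ^ a)
    (heq : A * B = C * D) : (A = C ∧ B = D) ∨ (A = D ∧ B = C) := by
  have h2 : (2 : Polynomial ℤ) ≠ 0 := by norm_num
  rcases hA with rfl | ⟨a, ha, rfl⟩ <;> rcases hB with rfl | ⟨b, hb, rfl⟩ <;>
    rcases hC with rfl | ⟨c, hC2, rfl⟩ <;> rcases hD with rfl | ⟨d, hD2, rfl⟩ <;>
    have e0 := congrArg (Polynomial.eval 0) heq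
  · exact Or.inl ⟨rfl, rfl⟩
  · simp [Polynomial.eval_mul, zero_pow (show d ≠ 0 by omega)] at e0
  · simp [Polynomial.eval_mul, zero_pow (show c ≠ 0 by omega)] at e0
  · simp [Polynomial.eval_mul, zero_pow (show c ≠ 0 by omega),
      zero_pow (show d ≠ 0 by omega)] at e0
  · simp [Polynomial.eval_mul, zero_pow (show b ≠ 0 by omega)] at e0
  · exact Or.inl ⟨rfl, mul_left_cancel₀ h2 heq⟩
  · exact Or.inr ⟨rfl, mul_left_cancel₀ h2 (by linear_combination heq)⟩
  · simp [Polynomial.eval_mul, zero_pow (show b ≠ 0 by omega),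
      zero_pow (show c ≠ 0 by omega), zero_pow (show d ≠ 0 by omega)] at e0
  · simp [Polynomial.eval_mul, zero_pow (show a ≠ 0 by omega)] at e0
  · exact Or.inr ⟨mul_left_cancel₀ h2 (by linear_combination heq), rfl⟩
  · exact Or.inl ⟨mul_left_cancel₀ h2 (by linear_combination heq), rfl⟩
  · simp [Polynomial.eval_mul, zero_pow (show a ≠ 0 by omega),
      zero_pow (show c ≠ 0 by omega), zero_pow (show d ≠ 0 by omega)] at e0
  · simp [Polynomial.eval_mul, zero_pow (show a ≠ 0 by omega),
      zero_pow (show b ≠ 0 by omega)] at e0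
  · simp [Polynomial.eval_mul, zero_pow (show a ≠ 0 by omega),
      zero_pow (show b ≠ 0 by omega), zero_pow (show d ≠ 0 by omega)] at e0
  · simp [Polynomial.eval_mul, zero_pow (show a ≠ 0 by omega),
      zero_pow (show b ≠ 0 by omega), zero_pow (show c ≠ 0 by omega)] at e0
  · rcases keylem' ha hb hC2 hD2 heq with ⟨rfl, rfl⟩ | ⟨rfl, rfl⟩
    · exact Or.inl ⟨rfl, rfl⟩
    · exact Or.inr ⟨rfl, rfl⟩

lemma one_le_prod (m : List ℤ) (h : ∀ x ∈ m, 2 ≤ x) : 1 ≤ m.prod := by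
  induction m with
  | nil => simp
  | cons x t ih =>
    have hx := h x (by simp)
    have ht := ih (fun y hy => h y (by simp [hy]))
    simp only [List.prod_cons]
    nlinarith

lemma shape (P : Polynomial ℤ) (hc : P.coeff 0 ≠ 0) (hsum : P.eval 1 = 4)
    (l : List (Polynomial ℤ)) (hi : ∀ Q ∈ l, IrredNN Q) (hprod : l.prod = P) :
    l = [P] ∨ ∃ A B, l = [A, B] ∧ A * B = P ∧
      (A = 2 ∨ ∃ a, 1 ≤ a ∧ A = 1 + X ^ a) ∧
      (B = 2 ∨ ∃ a, 1 ≤ a ∧ B = 1 + X ^ a) := by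
  have hK : ∀ Q ∈ l, Q.eval 0 ≠ 0 := by
    intro Q hm hz
    apply hc
    rw [Polynomial.coeff_zero_eq_eval_zero, ← hprod, Polynomial.eval_list_prod]
    exact List.prod_eq_zero (List.mem_map.mpr ⟨Q, hm, hz⟩)
  have hK' : ∀ Q ∈ l, Q.coeff 0 ≠ 0 := by
    intro Q hm
    rw [Polynomial.coeff_zero_eq_eval_zero]; exact hK Q hm
  have hE : ∀ Q ∈ l, 2 ≤ Q.eval 1 := by
    intro Q hm
    exact two_le_eval (hi Q hm).1 (hi Q hm).2.1 (hK' Q hm)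
  have h4 : (l.map (Polynomial.eval 1)).prod = 4 := by
    rw [← Polynomial.eval_list_prod, hprod, hsum]
  rcases l with _ | ⟨A, _ | ⟨B, _ | ⟨Cq, rest⟩⟩⟩
  · rw [List.prod_nil] at hprod
    rw [← hprod] at hsum; simp at hsum
  · left
    simp only [List.prod_singleton] at hprod
    rw [hprod]
  · right
    simp only [List.prod_cons, List.prod_nil, mul_one] at hprod
    simp only [List.map_cons, List.map_nil, List.prod_cons, List.prod_nil, mul_one] at h4
    have hA2 : 2 ≤ A.eval 1 := hE A (by simp)
    have hB2 : 2 ≤ B.eval 1 := hE B (by simp)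
    have hAe : A.eval 1 = 2 ∧ B.eval 1 = 2 := by
      constructor <;> nlinarith
    refine ⟨A, B, rfl, hprod, ?_, ?_⟩
    · exact class2 (hi A (by simp)).1 (hK' A (by simp)) hAe.1
    · exact class2 (hi B (by simp)).1 (hK' B (by simp)) hAe.2
  · exfalso
    simp only [List.map_cons, List.prod_cons] at h4
    have hA2 : 2 ≤ A.eval 1 := hE A (by simp)
    have hB2 : 2 ≤ B.eval 1 := hE B (by simp)
    have hC2 : 2 ≤ Cq.eval 1 := hE Cq (by simp)
    have hR : 1 ≤ (rest.map (Polynomial.eval 1)).prod := by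
      apply one_le_prod
      intro x hx
      rcases List.mem_map.mp hx with ⟨Q, hQ, rfl⟩
      exact hE Q (by simp [hQ])
    set R := (rest.map (Polynomial.eval 1)).prod with hRdef
    have k1 : 2 ≤ Cq.eval 1 * R := by nlinarith
    have k2 : 4 ≤ B.eval 1 * (Cq.eval 1 * R) := by nlinarith
    have k3 : 8 ≤ A.eval 1 * (B.eval 1 * (Cq.eval 1 * R)) := by nlinarith
    omega

theorem stmt6 (P : Polynomial ℤ) (hP : ∀ n, 0 ≤ P.coeff n)
    (hc : P.coeff 0 ≠ 0) (hsum : P.eval 1 = 4) :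
    ∀ l l' : List (Polynomial ℤ),
      (∀ Q ∈ l, IrredNN Q) → (∀ Q ∈ l', IrredNN Q) →
      l.prod = P → l'.prod = P → l.Perm l' := by
  intro l l' hl hl' hp hp'
  rcases shape P hc hsum l hl hp with rfl | ⟨A, B, rfl, hAB, hA, hB⟩ <;>
    rcases shape P hc hsum l' hl' hp' with rfl | ⟨C, D, rfl, hCD, hC, hD⟩
  · exact List.Perm.refl _
  · exfalso
    rcases (hl P (by simp)).2.2 C D (hl' C (by simp)).1 (hl' D (by simp)).1 hCD.symm with h | h
    · exact (hl' C (by simp)).2.1 h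
    · exact (hl' D (by simp)).2.1 h
  · exfalso
    rcases (hl' P (by simp)).2.2 A B (hl A (by simp)).1 (hl B (by simp)).1 hAB.symm with h | h
    · exact (hl A (by simp)).2.1 h
    · exact (hl B (by simp)).2.1 h
  · rcases pairs hA hB hC hD (hAB.trans hCD.symm) with ⟨rfl, rfl⟩ | ⟨rfl, rfl⟩
    · exact List.Perm.refl _
    · exact List.Perm.swap _ _ _
end

section
/- Let P ∈ ℤ[X] have nonnegative coefficients, nonzero constant term, and P(1) = 6. If P admits two essentially distinct factorizations into two nonconstant factors in the monoid of polynomials with nonnegative integer coefficients, then P = 1 + X^b + X^{2b} + X^{3b} + X^{4b} + X^{5b} for some positive integer b. -/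
open Polynomial

/-!
A polynomial with nonnegative integer coefficients is `∑_{m ∈ M} X ^ m` for a multiset `M` of
exponents with `|M| = P(1)`. A nonconstant factor with nonzero constant term has at least two
terms, so `P(1) = 6` forces factors with two and three terms:
`P = (1 + X ^ a) * (1 + X ^ c + X ^ d)` with `0 < a` and `c ≤ d`. Two such factorizations with
`a < a'` give the same exponent multiset `{0, a, c, a + c, d, a + d}`; comparing maxima, sums and
a few memberships forces `c = 2a` and `d = 4a`.
-/

theorem Sym2.mul_eq_mul_of_eq {M : Type*} [CommMagma M] {a b c d : M} (h : s(a, b) = s(c, d)) :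
    a * b = c * d := by
  rcases Sym2.eq_iff.1 h with ⟨rfl, rfl⟩ | ⟨rfl, rfl⟩
  · rfl
  · exact mul_comm a b

noncomputable def polyOfExponents (M : Multiset ℕ) : ℤ[X] := (M.map (X ^ ·)).sum

@[simp]
theorem polyOfExponents_zero : polyOfExponents 0 = 0 := rfl

@[simp]
theorem polyOfExponents_cons (n : ℕ) (M : Multiset ℕ) :
    polyOfExponents (n ::ₘ M) = X ^ n + polyOfExponents M := by
  simp [polyOfExponents]

@[simp]
theorem polyOfExponents_singleton (n : ℕ) : polyOfExponents {n} = X ^ n := by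
  simp [polyOfExponents]

theorem coeff_polyOfExponents (M : Multiset ℕ) (n : ℕ) :
    (polyOfExponents M).coeff n = M.count n := by
  induction M using Multiset.induction with
  | empty => simp
  | cons m M ih =>
    rw [polyOfExponents_cons, coeff_add, ih, coeff_X_pow, Multiset.count_cons]
    split_ifs <;> simp_all [add_comm]

theorem eval_one_polyOfExponents (M : Multiset ℕ) :
    (polyOfExponents M).eval 1 = M.card := by
  induction M using Multiset.induction with
  | empty => simp
  | cons m M ih => simp [ih, add_comm]

theorem polyOfExponents_injective : Function.Injective polyOfExponents := by
  intro M N h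
  ext n
  have := congrArg (coeff · n) h
  simpa [coeff_polyOfExponents] using this

theorem NNcoeff.exists_eq_polyOfExponents {Q : ℤ[X]} (hQ : NNcoeff Q) :
    ∃ M, Q = polyOfExponents M := by
  refine ⟨Finsupp.toMultiset (Finsupp.onFinset Q.support (fun n => (Q.coeff n).toNat) ?_), ?_⟩
  · intro n hn
    exact mem_support_iff.mpr fun h => hn (by simp [h])
  · ext n
    simp [coeff_polyOfExponents, Int.toNat_of_nonneg (hQ n)]

theorem NNcoeff.exists_eq_one_add_polyOfExponents_add_X_pow {Q : ℤ[X]} (hQ : NNcoeff Q)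
    (h0 : Q.coeff 0 ≠ 0) (hd : 0 < Q.natDegree) :
    ∃ n R, 0 < n ∧ (∀ x ∈ R, x ≤ n) ∧ Q = 1 + polyOfExponents R + X ^ n := by
  obtain ⟨M, rfl⟩ := hQ.exists_eq_polyOfExponents
  have mem_iff : ∀ k, k ∈ M ↔ (polyOfExponents M).coeff k ≠ 0 := by
    simp [coeff_polyOfExponents]
  have h0M : 0 ∈ M := (mem_iff 0).2 h0
  have hnM : (polyOfExponents M).natDegree ∈ M.erase 0 :=
    (Multiset.mem_erase_of_ne hd.ne').2 <|
      (mem_iff _).2 (leadingCoeff_ne_zero.2 (ne_zero_of_natDegree_gt hd))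
  refine ⟨_, (M.erase 0).erase (polyOfExponents M).natDegree, hd, fun x hx =>
    le_natDegree_of_ne_zero <|
      (mem_iff x).1 (Multiset.mem_of_mem_erase (Multiset.mem_of_mem_erase hx)), ?_⟩
  have hM := (congrArg (0 ::ₘ ·) (Multiset.cons_erase hnM)).trans (Multiset.cons_erase h0M)
  calc polyOfExponents M = polyOfExponents (0 ::ₘ _ ::ₘ _) := congrArg polyOfExponents hM.symm
    _ = _ := by simp only [polyOfExponents_cons, pow_zero]; ring

theorem sym2_eq_of_eval_one_mul_eq_six {S T : ℤ[X]} (hS : NNcoeff S) (hT : NNcoeff T)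
    (hS0 : S.coeff 0 ≠ 0) (hT0 : T.coeff 0 ≠ 0) (hdS : 0 < S.natDegree) (hdT : 0 < T.natDegree)
    (h : S.eval 1 * T.eval 1 = 6) :
    ∃ a c d : ℕ, 0 < a ∧ c ≤ d ∧ s(S, T) = s(1 + X ^ a, 1 + X ^ c + X ^ d) := by
  obtain ⟨m, R, hm, hR, rfl⟩ := hS.exists_eq_one_add_polyOfExponents_add_X_pow hS0 hdS
  obtain ⟨n, U, hn, hU, rfl⟩ := hT.exists_eq_one_add_polyOfExponents_add_X_pow hT0 hdT
  have hcard : (R.card + 2) * (U.card + 2) = 6 := by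
    simp only [eval_add, eval_one, eval_pow, eval_X, one_pow, eval_one_polyOfExponents] at h
    exact_mod_cast (by linarith : ((R.card : ℤ) + 2) * (U.card + 2) = 6)
  have hR1 : R.card ≤ 1 := by nlinarith
  have hU1 : U.card ≤ 1 := by nlinarith
  obtain ⟨hr, hu⟩ | ⟨hr, hu⟩ : R.card = 0 ∧ U.card = 1 ∨ R.card = 1 ∧ U.card = 0 := by
    interval_cases R.card <;> interval_cases U.card <;> omega
  · obtain ⟨c, rfl⟩ := Multiset.card_eq_one.1 hu
    refine ⟨m, c, n, hm, hU c (Multiset.mem_singleton_self c), ?_⟩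
    simp [Multiset.card_eq_zero.1 hr]
  · obtain ⟨c, rfl⟩ := Multiset.card_eq_one.1 hr
    refine ⟨n, c, m, hn, hR c (Multiset.mem_singleton_self c), ?_⟩
    simp [Multiset.card_eq_zero.1 hu, Sym2.eq_swap]

theorem eq_two_mul_and_eq_four_mul_of_multiset_eq {a c d a' c' d' : ℕ} (ha : 0 < a)
    (hlt : a < a') (hcd : c ≤ d) (hcd' : c' ≤ d')
    (h : ({0, a, c, a + c, d, a + d} : Multiset ℕ) = {0, a', c', a' + c', d', a' + d'}) :
    c = 2 * a ∧ d = 4 * a := by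
  have mem_right : ∀ x ∈ ({0, a, c, a + c, d, a + d} : Multiset ℕ),
      x = 0 ∨ x = a' ∨ x = c' ∨ x = a' + c' ∨ x = d' ∨ x = a' + d' := by
    intro x hx; rw [h] at hx; simpa using hx
  have mem_left : ∀ x ∈ ({0, a', c', a' + c', d', a' + d'} : Multiset ℕ),
      x = 0 ∨ x = a ∨ x = c ∨ x = a + c ∨ x = d ∨ x = a + d := by
    intro x hx; rw [← h] at hx; simpa using hx
  have hmax : a + d = a' + d' := by
    have := mem_right (a + d) (by simp)
    have := mem_left (a' + d') (by simp)
    omega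
  have hsum : a + 2 * c = a' + 2 * c' := by
    have := congrArg Multiset.sum h
    simp only [Multiset.insert_eq_cons, Multiset.sum_cons, Multiset.sum_singleton] at this
    omega
  have hc' : c' = a := by
    have := mem_right a (by simp)
    have := mem_right c (by simp)
    have := mem_right (a + c) (by simp)
    have := mem_left c' (by simp)
    omega
  have hac : a < c := by
    have := mem_right c (by simp)
    omega
  have hd' : d' = c := by
    have := mem_right c (by simp)
    omega
  have := mem_right (a + c) (by simp)
  omega

theorem one_add_X_pow_mul_eq_polyOfExponents (a c d : ℕ) :
    (1 + X ^ a : ℤ[X]) * (1 + X ^ c + X ^ d) = polyOfExponents {0, a, c, a + c, d, a + d} := by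
  simp only [Multiset.insert_eq_cons, polyOfExponents_cons, polyOfExponents_singleton, pow_zero,
    pow_add]
  ring

theorem one_add_X_pow_mul_eq_of_lt {a c d a' c' d' : ℕ} (ha : 0 < a) (hlt : a < a')
    (hcd : c ≤ d) (hcd' : c' ≤ d')
    (h : (1 + X ^ a : ℤ[X]) * (1 + X ^ c + X ^ d) = (1 + X ^ a') * (1 + X ^ c' + X ^ d')) :
    (1 + X ^ a : ℤ[X]) * (1 + X ^ c + X ^ d) =
      1 + X ^ a + X ^ (2 * a) + X ^ (3 * a) + X ^ (4 * a) + X ^ (5 * a) := by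
  rw [one_add_X_pow_mul_eq_polyOfExponents, one_add_X_pow_mul_eq_polyOfExponents] at h
  obtain ⟨rfl, rfl⟩ :=
    eq_two_mul_and_eq_four_mul_of_multiset_eq ha hlt hcd hcd' (polyOfExponents_injective h)
  ring

theorem stmt7_general (P : Polynomial ℤ)
    (hc : P.coeff 0 ≠ 0) (hsum : P.eval 1 = 6)
    (S T S' T' : Polynomial ℤ)
    (hS : NNcoeff S) (hT : NNcoeff T) (hS' : NNcoeff S') (hT' : NNcoeff T')
    (hdS : 0 < S.natDegree) (hdT : 0 < T.natDegree)
    (hdS' : 0 < S'.natDegree) (hdT' : 0 < T'.natDegree)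
    (h1 : P = S * T) (h2 : P = S' * T')
    (hdist : ¬((S = S' ∧ T = T') ∨ (S = T' ∧ T = S'))) :
    ∃ b : ℕ, 0 < b ∧
      P = 1 + X ^ b + X ^ (2 * b) + X ^ (3 * b) + X ^ (4 * b) + X ^ (5 * b) := by
  have h0 : S.coeff 0 * T.coeff 0 ≠ 0 := by rwa [← mul_coeff_zero, ← h1]
  have h0' : S'.coeff 0 * T'.coeff 0 ≠ 0 := by rwa [← mul_coeff_zero, ← h2]
  obtain ⟨a, c, d, ha, hcd, hST⟩ := sym2_eq_of_eval_one_mul_eq_six hS hT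
    (left_ne_zero_of_mul h0) (right_ne_zero_of_mul h0) hdS hdT (by rw [← eval_mul, ← h1, hsum])
  obtain ⟨a', c', d', ha', hcd', hST'⟩ := sym2_eq_of_eval_one_mul_eq_six hS' hT'
    (left_ne_zero_of_mul h0') (right_ne_zero_of_mul h0') hdS' hdT'
    (by rw [← eval_mul, ← h2, hsum])
  have hP : P = (1 + X ^ a) * (1 + X ^ c + X ^ d) := h1.trans (Sym2.mul_eq_mul_of_eq hST)
  have hP' : P = (1 + X ^ a') * (1 + X ^ c' + X ^ d') := h2.trans (Sym2.mul_eq_mul_of_eq hST')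
  have hne : a ≠ a' := by
    rintro rfl
    have hA : (1 + X ^ a : ℤ[X]) ≠ 0 := fun h => by simpa using congrArg (eval 1) h
    refine hdist (Sym2.eq_iff.1 ?_)
    rw [hST, hST', mul_left_cancel₀ hA (hP.symm.trans hP')]
  rcases hne.lt_or_gt with hlt | hlt
  · exact ⟨a, ha, hP.trans <|
      one_add_X_pow_mul_eq_of_lt ha hlt hcd hcd' (hP.symm.trans hP')⟩
  · exact ⟨a', ha', hP'.trans <|
      one_add_X_pow_mul_eq_of_lt ha' hlt hcd' hcd (hP'.symm.trans hP)⟩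

theorem stmt7 (P : Polynomial ℤ) (hP : ∀ n, 0 ≤ P.coeff n)
    (hc : P.coeff 0 ≠ 0) (hsum : P.eval 1 = 6)
    (S T S' T' : Polynomial ℤ)
    (hS : NNcoeff S) (hT : NNcoeff T) (hS' : NNcoeff S') (hT' : NNcoeff T')
    (hdS : 0 < S.natDegree) (hdT : 0 < T.natDegree)
    (hdS' : 0 < S'.natDegree) (hdT' : 0 < T'.natDegree)
    (h1 : P = S * T) (h2 : P = S' * T')
    (hdist : ¬((S = S' ∧ T = T') ∨ (S = T' ∧ T = S'))) :
    ∃ b : ℕ, 0 < b ∧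
      P = 1 + X ^ b + X ^ (2 * b) + X ^ (3 * b) + X ^ (4 * b) + X ^ (5 * b) :=
  stmt7_general P hc hsum S T S' T' hS hT hS' hT' hdS hdT hdS' hdT' h1 h2 hdist
end

section
/- Let G and H be connected finite graphs (symmetric binary relations, loops allowed). The direct (tensor) product G × H is bipartite if and only if G is bipartite or H is bipartite. -/
def Bip {V : Type*} (adj : V → V → Prop) : Prop :=
  ∃ f : V → Bool, ∀ u v, adj u v → f u ≠ f v

private def Wk {V : Type*} (G : V → V → Prop) : ℕ → V → V → Prop
  | 0, u, v => u = v
  | n+1, u, v => ∃ w, G u w ∧ Wk G n w v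

private lemma wk_append {V : Type*} {G : V → V → Prop} :
    ∀ {m n : ℕ} {u v w : V}, Wk G m u v → Wk G n v w → Wk G (m + n) u w := by
  intro m
  induction m with
  | zero => intro n u v w h1 h2; cases h1; simpa using h2
  | succ m ih =>
    intro n u v w h1 h2
    obtain ⟨x, hx, hw⟩ := h1
    rw [Nat.succ_add]
    exact ⟨x, hx, ih hw h2⟩

private lemma wk_rev {V : Type*} {G : V → V → Prop} (hs : Symmetric G) :
    ∀ {n : ℕ} {u v : V}, Wk G n u v → Wk G n v u := by
  intro n
  induction n with
  | zero => intro u v h; exact h.symm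
  | succ n ih =>
    intro u v h
    obtain ⟨x, hx, hw⟩ := h
    have : Wk G (n + 1) v u := wk_append (ih hw) ⟨u, hs hx, rfl⟩
    exact this

private lemma wk_repeat {V : Type*} {G : V → V → Prop} {n : ℕ} {u : V}
    (h : Wk G n u u) : ∀ k : ℕ, Wk G (k * n) u u := by
  intro k
  induction k with
  | zero => rw [Nat.zero_mul]; exact rfl
  | succ k ih =>
    rw [Nat.succ_mul]
    exact wk_append ih h

private lemma wk_prod {V W : Type*} {G : V → V → Prop} {H : W → W → Prop} :
    ∀ {n : ℕ} {u u' : V} {w w' : W}, Wk G n u u' → Wk H n w w' →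
      Wk (fun (p q : V × W) => G p.1 q.1 ∧ H p.2 q.2) n (u, w) (u', w') := by
  intro n
  induction n with
  | zero => intro u u' w w' h1 h2; cases h1; cases h2; rfl
  | succ n ih =>
    intro u u' w w' h1 h2
    obtain ⟨x, hx, hw1⟩ := h1
    obtain ⟨y, hy, hw2⟩ := h2
    exact ⟨(x, y), ⟨hx, hy⟩, ih hw1 hw2⟩

private lemma wk_parity {V : Type*} {G : V → V → Prop} {f : V → Bool}
    (hf : ∀ u v, G u v → f u ≠ f v) :
    ∀ {n : ℕ} {u v : V}, Wk G n u v → (f u = f v ↔ Even n) := by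
  intro n
  induction n with
  | zero => intro u v h; cases h; simp
  | succ n ih =>
    intro u v h
    obtain ⟨x, hx, hw⟩ := h
    have h1 : f x = !f u := by
      have := hf u x hx
      cases hfu : f u <;> cases hfx : f x <;> simp_all
    have h2 := ih hw
    rw [h1] at h2
    rw [Nat.even_add_one]
    constructor
    · intro he hn
      have := h2.2 hn
      rw [← this] at he
      simp at he
    · intro hn
      have : ¬ ((!f u) = f v) := fun hc => hn (h2.1 hc)
      cases hfu : f u <;> cases hfv : f v <;> simp_all

private lemma rtg_wk {V : Type*} {G : V → V → Prop} {u v : V}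
    (h : Relation.ReflTransGen G u v) : ∃ n, Wk G n u v := by
  induction h with
  | refl => exact ⟨0, rfl⟩
  | tail _ hxy ih =>
    obtain ⟨n, hn⟩ := ih
    exact ⟨n + 1, wk_append hn ⟨_, hxy, rfl⟩⟩

private lemma odd_closed {V : Type*} [Nonempty V] {G : V → V → Prop}
    (hs : Symmetric G) (hc : ∀ u v : V, Relation.ReflTransGen G u v)
    (hnb : ¬ Bip G) : ∃ (u : V) (n : ℕ), Odd n ∧ Wk G n u u := by
  classical
  obtain ⟨u₀⟩ := ‹Nonempty V›
  set f : V → Bool := fun u => decide (∃ n, Odd n ∧ Wk G n u₀ u) with hfdef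
  have : ¬ ∀ u v, G u v → f u ≠ f v := fun h => hnb ⟨f, h⟩
  push_neg at this
  obtain ⟨u, v, huv, hfeq⟩ := this
  by_cases hu : ∃ n, Odd n ∧ Wk G n u₀ u
  · have hv : ∃ n, Odd n ∧ Wk G n u₀ v := by
      have : f u = true := by simp [hfdef, hu]
      rw [this] at hfeq
      simpa [hfdef] using hfeq.symm
    obtain ⟨a, ha, hwa⟩ := hu
    obtain ⟨b, hb, hwb⟩ := hv
    refine ⟨u₀, a + 1 + b, ?_, ?_⟩
    · obtain ⟨i, hi⟩ := ha; obtain ⟨j, hj⟩ := hb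
      exact ⟨i + 1 + j, by omega⟩
    · exact wk_append (wk_append hwa ⟨v, huv, rfl⟩) (wk_rev hs hwb)
  · have hv : ¬ ∃ n, Odd n ∧ Wk G n u₀ v := by
      have : f u = false := by simp [hfdef, hu]
      rw [this] at hfeq
      simpa [hfdef] using hfeq.symm
    obtain ⟨a, hwa⟩ := rtg_wk (hc u₀ u)
    obtain ⟨b, hwb⟩ := rtg_wk (hc u₀ v)
    have ha : Even a := by
      by_contra h
      exact hu ⟨a, Nat.not_even_iff_odd.1 h, hwa⟩
    have hb : Even b := by
      by_contra h
      exact hv ⟨b, Nat.not_even_iff_odd.1 h, hwb⟩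
    refine ⟨u₀, a + 1 + b, ?_, ?_⟩
    · obtain ⟨i, hi⟩ := ha; obtain ⟨j, hj⟩ := hb
      exact ⟨i + j, by omega⟩
    · exact wk_append (wk_append hwa ⟨v, huv, rfl⟩) (wk_rev hs hwb)

theorem stmt14 {V W : Type*} [Fintype V] [Fintype W] [Nonempty V] [Nonempty W]
    (G : V → V → Prop) (H : W → W → Prop)
    (hGsymm : Symmetric G) (hHsymm : Symmetric H)
    (hGconn : ∀ u v : V, Relation.ReflTransGen G u v)
    (hHconn : ∀ u v : W, Relation.ReflTransGen H u v) :
    Bip (fun (p q : V × W) => G p.1 q.1 ∧ H p.2 q.2) ↔ Bip G ∨ Bip H := by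
  constructor
  · intro ⟨f, hf⟩
    by_contra hor
    push_neg at hor
    obtain ⟨hG, hH⟩ := hor
    obtain ⟨u, a, ha, hwa⟩ := odd_closed hGsymm hGconn hG
    obtain ⟨w, b, hb, hwb⟩ := odd_closed hHsymm hHconn hH
    have hG' : Wk G (b * a) u u := wk_repeat hwa b
    have hH' : Wk H (b * a) w w := by rw [mul_comm]; exact wk_repeat hwb a
    have hP := wk_prod (G := G) (H := H) hG' hH'
    have := (wk_parity hf hP).1 rfl
    have hodd : Odd (b * a) := hb.mul ha
    exact (Nat.not_even_iff_odd.2 hodd) this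
  · rintro (⟨f, hf⟩ | ⟨f, hf⟩)
    · exact ⟨fun p => f p.1, fun p q h => hf p.1 q.1 h.1⟩
    · exact ⟨fun p => f p.2, fun p q h => hf p.2 q.2 h.2⟩
end

section
/- The monoid of polynomials in ℤ[X] with nonnegative integer coefficients is not half-factorial: the polynomial (1 + X^3 + X^5 + X^6)(1 + X + X^2 + X^4) admits one factorization into 2 irreducibles and another into 3 irreducibles of this monoid. -/
/-!
Constant terms and coefficient sums (evaluation at `1`) are multiplicative, and among polynomials
with nonnegative coefficients and constant term `1` the coefficient sum singles out `1` (sum `1`)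
and the binomials `1 + X ^ m` (sum `2`). Hence `1 + X` and `1 + X ^ 2` are irreducible, and a
polynomial with constant term `1` and coefficient sum `4` is irreducible unless it is
`(1 + X ^ m) * (1 + X ^ n)`. Evaluating at `2` excludes this for `1 + X ^ 3 + X ^ 5 + X ^ 6`,
`1 + X + X ^ 2 + X ^ 4` and `1 + 2 X ^ 4 + X ^ 7`: none of `105`, `23`, `161` is of the form
`(1 + 2 ^ m) * (1 + 2 ^ n)`.
-/

open Polynomial

namespace NNcoeff

variable {P Q : ℤ[X]}

theorem one : NNcoeff 1 := fun n => by
  rw [coeff_one]; split_ifs <;> norm_num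

theorem X_pow (k : ℕ) : NNcoeff (X ^ k) := fun n => by
  rw [coeff_X_pow]; split_ifs <;> norm_num

theorem ofNat (k : ℕ) [k.AtLeastTwo] : NNcoeff (OfNat.ofNat k) := fun n => by
  rcases n with _ | n
  · rw [coeff_ofNat_zero]; exact Nat.cast_ofNat (R := ℤ) (n := k) ▸ Nat.cast_nonneg _
  · rw [coeff_ofNat_succ]

theorem add (hP : NNcoeff P) (hQ : NNcoeff Q) : NNcoeff (P + Q) := fun n => by
  rw [coeff_add]; exact add_nonneg (hP n) (hQ n)

theorem mul (hP : NNcoeff P) (hQ : NNcoeff Q) : NNcoeff (P * Q) := fun n => by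
  rw [coeff_mul]; exact Finset.sum_nonneg fun x _ => mul_nonneg (hP x.1) (hQ x.2)

theorem sub_C_coeff_zero (hP : NNcoeff P) : NNcoeff (P - C (P.coeff 0)) := fun n => by
  rcases n with _ | n
  · simp
  · rw [coeff_sub, coeff_C_succ, sub_zero]; exact hP _

theorem eval_one_nonneg (hP : NNcoeff P) : 0 ≤ P.eval 1 := by
  rw [eval_eq_sum]
  exact Finset.sum_nonneg fun i _ => by simpa using hP i

theorem eq_zero_of_eval_one_eq_zero (hP : NNcoeff P) (h : P.eval 1 = 0) : P = 0 := by
  rw [eval_eq_sum, Polynomial.sum] at h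
  simp only [one_pow, mul_one] at h
  have hzero := (Finset.sum_eq_zero_iff_of_nonneg fun i _ => hP i).mp h
  ext n
  by_cases hn : n ∈ P.support
  · simpa using hzero n hn
  · simpa using notMem_support_iff.mp hn

/-- The leading coefficient is at least `1`, so subtracting the leading monomial leaves the
coefficients nonnegative and the coefficient sum `0`. -/
theorem exists_eq_X_pow_of_eval_one_eq_one (hP : NNcoeff P) (h : P.eval 1 = 1) :
    ∃ m, P = X ^ m := by
  have hP0 : P ≠ 0 := by rintro rfl; simp at h
  have hlead : P.coeff P.natDegree ≠ 0 := leadingCoeff_ne_zero.mpr hP0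
  have hsub : NNcoeff (P - X ^ P.natDegree) := fun n => by
    rw [coeff_sub, coeff_X_pow]
    split_ifs with hn
    · subst hn; have := hP P.natDegree; omega
    · simpa using hP n
  refine ⟨P.natDegree, sub_eq_zero.mp (hsub.eq_zero_of_eval_one_eq_zero ?_)⟩
  simp [h]

theorem eq_one_of_eval_one_eq_one (hP : NNcoeff P) (h0 : P.coeff 0 = 1) (h1 : P.eval 1 = 1) :
    P = 1 := by
  have hsub : NNcoeff (P - 1) := by simpa [h0] using hP.sub_C_coeff_zero
  exact sub_eq_zero.mp (hsub.eq_zero_of_eval_one_eq_zero (by simp [h1]))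

theorem exists_eq_one_add_X_pow_of_eval_one_eq_two (hP : NNcoeff P) (h0 : P.coeff 0 = 1)
    (h1 : P.eval 1 = 2) : ∃ m, P = 1 + X ^ m := by
  have hsub : NNcoeff (P - 1) := by simpa [h0] using hP.sub_C_coeff_zero
  obtain ⟨m, hm⟩ := hsub.exists_eq_X_pow_of_eval_one_eq_one (by simp [h1])
  exact ⟨m, by rw [← hm]; ring⟩

end NNcoeff

theorem NNcoeff.X : NNcoeff X := by
  simpa using NNcoeff.X_pow 1

theorem irredNN_of_forall_eval_one_eq_one {P : ℤ[X]} (hP : NNcoeff P) (h0 : P.coeff 0 = 1)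
    (h1 : P.eval 1 ≠ 1)
    (h : ∀ S T : ℤ[X], NNcoeff S → NNcoeff T → S.coeff 0 = 1 → T.coeff 0 = 1 → P = S * T →
      S.eval 1 = 1 ∨ T.eval 1 = 1) :
    IrredNN P := by
  refine ⟨hP, by rintro rfl; simp at h1, fun S T hS hT hST => ?_⟩
  rw [hST, mul_coeff_zero] at h0
  have hS0 : S.coeff 0 = 1 := Int.eq_one_of_mul_eq_one_right (hS 0) h0
  have hT0 : T.coeff 0 = 1 := Int.eq_one_of_mul_eq_one_left (hT 0) h0
  exact (h S T hS hT hS0 hT0 hST).imp (hS.eq_one_of_eval_one_eq_one hS0)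
    (hT.eq_one_of_eval_one_eq_one hT0)

theorem irredNN_of_eval_one_eq_two {P : ℤ[X]} (hP : NNcoeff P) (h0 : P.coeff 0 = 1)
    (h1 : P.eval 1 = 2) : IrredNN P := by
  refine irredNN_of_forall_eval_one_eq_one hP h0 (by rw [h1]; norm_num)
    fun S T hS hT _ _ hST => ?_
  rw [hST, eval_mul] at h1
  have hS1 := hS.eval_one_nonneg
  have hS2 : S.eval 1 ≤ 2 := Int.le_of_dvd (by norm_num) ⟨_, h1.symm⟩
  interval_cases S.eval 1 <;> omega

theorem irredNN_of_eval_one_eq_four {P : ℤ[X]} (hP : NNcoeff P) (h0 : P.coeff 0 = 1)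
    (h1 : P.eval 1 = 4) (hbin : ∀ m n : ℕ, (1 + X ^ m) * (1 + X ^ n) ≠ P) : IrredNN P := by
  refine irredNN_of_forall_eval_one_eq_one hP h0 (by rw [h1]; norm_num)
    fun S T hS hT hS0 hT0 hST => ?_
  rw [hST, eval_mul] at h1
  have hS1 := hS.eval_one_nonneg
  have hS4 : S.eval 1 ≤ 4 := Int.le_of_dvd (by norm_num) ⟨_, h1.symm⟩
  have htwo : S.eval 1 = 2 → T.eval 1 = 2 → False := fun hS2 hT2 => by
    obtain ⟨m, rfl⟩ := hS.exists_eq_one_add_X_pow_of_eval_one_eq_two hS0 hS2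
    obtain ⟨n, rfl⟩ := hT.exists_eq_one_add_X_pow_of_eval_one_eq_two hT0 hT2
    exact hbin m n hST.symm
  interval_cases hSv : S.eval 1
  · omega
  · exact Or.inl rfl
  · exact (htwo rfl (by omega)).elim
  · omega
  · omega

theorem one_add_X_pow_mul_one_add_X_pow_ne {P : ℤ[X]} (k : ℕ) (hk : P.eval 2 < 2 ^ k)
    (h : ∀ m < k, ∀ n < k, ((1 : ℤ) + 2 ^ m) * (1 + 2 ^ n) ≠ P.eval 2) (m n : ℕ) :
    (1 + X ^ m) * (1 + X ^ n) ≠ P := by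
  rintro rfl
  simp only [eval_mul, eval_add, eval_one, eval_pow, eval_X] at hk h
  have h2m : (0 : ℤ) < 2 ^ m := by positivity
  have h2n : (0 : ℤ) < 2 ^ n := by positivity
  have hm : m < k := by
    by_contra! hkm
    have : (2 : ℤ) ^ k ≤ 2 ^ m := pow_le_pow_right₀ (by norm_num) hkm
    nlinarith
  have hn : n < k := by
    by_contra! hkn
    have : (2 : ℤ) ^ k ≤ 2 ^ n := pow_le_pow_right₀ (by norm_num) hkn
    nlinarith
  exact h m hm n hn rfl

theorem stmt18 :
    ∃ l₁ l₂ : List (Polynomial ℤ),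
      (∀ Q ∈ l₁, IrredNN Q) ∧ (∀ Q ∈ l₂, IrredNN Q) ∧
      l₁.prod = (1 + X ^ 3 + X ^ 5 + X ^ 6) * (1 + X + X ^ 2 + X ^ 4) ∧
      l₂.prod = (1 + X ^ 3 + X ^ 5 + X ^ 6) * (1 + X + X ^ 2 + X ^ 4) ∧
      l₁.length = 2 ∧ l₂.length = 3 := by
  have hA : IrredNN (1 + X ^ 3 + X ^ 5 + X ^ 6) :=
    irredNN_of_eval_one_eq_four
      (((NNcoeff.one.add (NNcoeff.X_pow 3)).add (NNcoeff.X_pow 5)).add (NNcoeff.X_pow 6))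
      (by simp) (by norm_num)
      (one_add_X_pow_mul_one_add_X_pow_ne 7 (by norm_num) (by norm_num; decide))
  have hB : IrredNN (1 + X + X ^ 2 + X ^ 4) :=
    irredNN_of_eval_one_eq_four
      (((NNcoeff.one.add NNcoeff.X).add (NNcoeff.X_pow 2)).add (NNcoeff.X_pow 4))
      (by simp) (by norm_num)
      (one_add_X_pow_mul_one_add_X_pow_ne 5 (by norm_num) (by norm_num; decide))
  have hC : IrredNN (1 + 2 * X ^ 4 + X ^ 7) :=
    irredNN_of_eval_one_eq_four
      ((NNcoeff.one.add ((NNcoeff.ofNat 2).mul (NNcoeff.X_pow 4))).add (NNcoeff.X_pow 7))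
      (by simp) (by norm_num)
      (one_add_X_pow_mul_one_add_X_pow_ne 8 (by norm_num) (by norm_num; decide))
  have hX1 : IrredNN (1 + X) :=
    irredNN_of_eval_one_eq_two (NNcoeff.one.add NNcoeff.X) (by simp) (by norm_num)
  have hX2 : IrredNN (1 + X ^ 2) :=
    irredNN_of_eval_one_eq_two (NNcoeff.one.add (NNcoeff.X_pow 2)) (by simp) (by norm_num)
  refine ⟨[1 + X ^ 3 + X ^ 5 + X ^ 6, 1 + X + X ^ 2 + X ^ 4],
    [1 + X, 1 + X ^ 2, 1 + 2 * X ^ 4 + X ^ 7], ?_, ?_, by simp, ?_, rfl, rfl⟩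
  · simp [hA, hB]
  · simp [hX1, hX2, hC]
  · simp only [List.prod_cons, List.prod_nil]
    ring
end
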